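/- arXiv:2504.14381 — 6 statements merged into one kernel-verified Lean document; each statement's English description precedes it below -/
import Mathlib

section
/- Shamir secret sharing satisfies t-privacy: let p be a prime, n < p, and S a subset of {1,...,n} with |S| ≤ t. For any two secrets s, s' in Z_p, the distribution of (q(i))_{i in S} when q is a uniformly random polynomial of degree at most t with q(0) = s is identical to the distribution of (q'(i))_{i in S} when q' is uniformly random of degree at most t with q'(0) = s'. -/
open Polynomial Finset

/-- Shamir `t`-privacy: for any subset `S` with `|S| ≤ t` and any two secrets `s, s'`,
the number of degree-≤t polynomials (represented by coefficient vectors `c : Fin (t+1) → ZMod p`)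
with constant term `s` producing any prescribed share values `(a i)_{i ∈ S}` is the same as
the number with constant term `s'`; hence the distributions of the shares on `S` induced by
a uniformly random polynomial with fixed constant term are identical. -/
theorem shamir_privacy (p n t : ℕ) (hp : p.Prime) (hnp : n < p)
    (S : Finset (Fin n)) (hS : S.card ≤ t) (s s' : ZMod p) (a : Fin n → ZMod p) :
    Nat.card {c : Fin (t + 1) → ZMod p //
        c 0 = s ∧ ∀ i ∈ S, ∑ k : Fin (t + 1), c k * ((i : ℕ) + 1 : ZMod p) ^ (k : ℕ) = a i}
      = Nat.card {c : Fin (t + 1) → ZMod p //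
        c 0 = s' ∧ ∀ i ∈ S, ∑ k : Fin (t + 1), c k * ((i : ℕ) + 1 : ZMod p) ^ (k : ℕ) = a i} := by
  haveI : Fact p.Prime := ⟨hp⟩
  have hx0 : ∀ i : Fin n, ((i : ℕ) + 1 : ZMod p) ≠ 0 := by
    intro i
    have h1 : ((i : ℕ) + 1 : ZMod p) = (((i : ℕ) + 1 : ℕ) : ZMod p) := by push_cast; ring
    rw [h1, Ne, ZMod.natCast_eq_zero_iff]
    intro hdvd
    exact absurd (Nat.le_of_dvd (Nat.succ_pos _) hdvd)
      (not_le.mpr (lt_of_le_of_lt (Nat.succ_le_of_lt i.isLt) hnp))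
  obtain ⟨d, hd0, hdS⟩ : ∃ d : Fin (t + 1) → ZMod p, d 0 = s' - s ∧
      ∀ i ∈ S, ∑ k : Fin (t + 1), d k * ((i : ℕ) + 1 : ZMod p) ^ (k : ℕ) = 0 := by
    set D : Polynomial (ZMod p) :=
      C (s' - s) * ∏ i ∈ S, (1 - C (((i : ℕ) + 1 : ZMod p))⁻¹ * X) with hD
    have hdeg : D.natDegree < t + 1 := by
      have h1 : D.natDegree ≤ 0 + ∑ i ∈ S, (1 - C (((i : ℕ) + 1 : ZMod p))⁻¹ * X).natDegree := by
        refine natDegree_mul_le.trans (add_le_add ?_ ?_)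
        · simp
        · exact natDegree_prod_le _ _
      have h2 : ∑ i ∈ S, (1 - C (((i : ℕ) + 1 : ZMod p))⁻¹ * X).natDegree ≤ S.card := by
        refine (Finset.sum_le_card_nsmul S _ 1 ?_).trans (by simp)
        intro i _
        refine (natDegree_sub_le _ _).trans ?_
        simp [natDegree_one]
        exact natDegree_C_mul_le _ _ |>.trans (by simp)
      have := le_trans h1 (by simpa using h2)
      omega
    refine ⟨fun k => D.coeff k, ?_, ?_⟩
    · show D.coeff ((0 : Fin (t+1)) : ℕ) = s' - s
      rw [Fin.val_zero, coeff_zero_eq_eval_zero, hD]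
      simp [eval_prod]
    · intro i hi
      have heval : D.eval ((i : ℕ) + 1 : ZMod p) = 0 := by
        rw [hD]
        simp only [eval_mul, eval_C, eval_prod]
        rw [Finset.prod_eq_zero hi]
        · ring
        · simp [inv_mul_cancel₀ (hx0 i)]
      rw [← heval, Polynomial.eval_eq_sum_range' hdeg]
      simpa using Fin.sum_univ_eq_sum_range
        (fun k => D.coeff k * ((i : ℕ) + 1 : ZMod p) ^ k) (t + 1)
  refine Nat.card_congr ⟨fun c => ⟨fun k => c.1 k + d k, ?_, ?_⟩,
    fun c => ⟨fun k => c.1 k - d k, ?_, ?_⟩, ?_, ?_⟩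
  · show c.1 0 + d 0 = s'
    rw [c.2.1, hd0]; ring
  · intro i hi
    simp only [add_mul, Finset.sum_add_distrib, c.2.2 i hi, hdS i hi, add_zero]
  · show c.1 0 - d 0 = s
    rw [c.2.1, hd0]; ring
  · intro i hi
    simp only [sub_mul, Finset.sum_sub_distrib, c.2.2 i hi, hdS i hi, sub_zero]
  · intro c; ext k; simp
  · intro c; ext k; simp
end

section
/- Let C ⊆ (Z_p)^n be the Shamir code of polynomials of degree at most t evaluated at 1,...,n, where n < p. Then the dual code C^⊥ (vectors orthogonal to every codeword of C under the standard bilinear form) equals {(v_1 r(1), v_2 r(2), ..., v_n r(n)) : r in Z_p[X], deg r ≤ n - t - 2}, where v_i = product over j ≠ i of 1/(j - i). -/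
open Polynomial Finset

lemma basis_coeff_top {F : Type*} [Field F] {n : ℕ} (x : Fin n → F) (i : Fin n) :
    (Lagrange.basis Finset.univ x i).coeff (n - 1)
      = ∏ j ∈ Finset.univ.erase i, (x i - x j)⁻¹ := by
  have hmono : ∀ j ∈ Finset.univ.erase i, (X - C (x j)).Monic :=
    fun j _ => monic_X_sub_C _
  have hM : (∏ j ∈ Finset.univ.erase i, (X - C (x j))).Monic :=
    monic_prod_of_monic _ _ hmono
  have hdeg : (∏ j ∈ Finset.univ.erase i, (X - C (x j))).natDegree = n - 1 := by
    rw [natDegree_prod_of_monic _ _ hmono]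
    simp [Finset.card_erase_of_mem, Finset.card_univ]
  have hb : Lagrange.basis Finset.univ x i
      = C (∏ j ∈ Finset.univ.erase i, (x i - x j)⁻¹)
        * ∏ j ∈ Finset.univ.erase i, (X - C (x j)) := by
    rw [Lagrange.basis]
    simp_rw [Lagrange.basisDivisor]
    rw [Finset.prod_mul_distrib, ← map_prod]
  rw [hb, coeff_C_mul, ← hdeg, hM.coeff_natDegree, mul_one]

lemma sum_eval_mul {F : Type*} [Field F] {n : ℕ} (x : Fin n → F)
    (hx : Function.Injective x) (f : Polynomial F) (hf : f.degree < n) :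
    ∑ i, f.eval (x i) * ∏ j ∈ Finset.univ.erase i, (x i - x j)⁻¹
      = f.coeff (n - 1) := by
  have hcard : (Finset.univ : Finset (Fin n)).card = n := by simp
  conv_rhs => rw [Lagrange.eq_interpolate (s := Finset.univ) (f := f) hx.injOn
    (by rwa [hcard])]
  rw [Lagrange.interpolate_apply, Polynomial.finset_sum_coeff]
  refine Finset.sum_congr rfl fun i _ => ?_
  rw [Polynomial.coeff_C_mul, basis_coeff_top x i]

/-- The dual of the Shamir code `C = {(q(1),...,q(n)) : deg q ≤ t}` equals
`{(v₁ r(1), ..., vₙ r(n)) : deg r ≤ n - t - 2}` where `vᵢ = ∏_{j ≠ i} 1/(j - i)`. -/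
theorem shamir_dual_code (p n t : ℕ) (hp : p.Prime) (hnp : n < p) (ht : t + 2 ≤ n)
    (y : Fin n → ZMod p) :
    (∀ q : Polynomial (ZMod p), q.natDegree ≤ t →
        ∑ i : Fin n, q.eval ((i : ℕ) + 1 : ZMod p) * y i = 0) ↔
      ∃ r : Polynomial (ZMod p), r.natDegree ≤ n - t - 2 ∧
        ∀ i : Fin n, y i =
          (∏ j ∈ Finset.univ.erase i,
              (((j : ℕ) + 1 : ZMod p) - ((i : ℕ) + 1 : ZMod p))⁻¹)
            * r.eval ((i : ℕ) + 1 : ZMod p) := by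
  haveI : Fact p.Prime := ⟨hp⟩
  have hxinj : Function.Injective (fun i : Fin n => ((i : ℕ) + 1 : ZMod p)) := by
    intro i j h
    have hi := i.2; have hj := j.2
    have h2 : (((i : ℕ) + 1 : ℕ) : ZMod p) = (((j : ℕ) + 1 : ℕ) : ZMod p) := by
      push_cast; exact h
    have h3 := congrArg ZMod.val h2
    rw [ZMod.val_cast_of_lt (by omega), ZMod.val_cast_of_lt (by omega)] at h3
    exact Fin.ext (by omega)
  have hcard_erase : ∀ i : Fin n, (Finset.univ.erase i).card = n - 1 := fun i => by
    rw [Finset.card_erase_of_mem (Finset.mem_univ i), Finset.card_univ, Fintype.card_fin]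
  have hvw : ∀ i : Fin n,
      (∏ j ∈ Finset.univ.erase i, (((j : ℕ) + 1 : ZMod p) - ((i : ℕ) + 1))⁻¹)
        = (-1) ^ (n - 1)
            * ∏ j ∈ Finset.univ.erase i, (((i : ℕ) + 1 : ZMod p) - ((j : ℕ) + 1))⁻¹ := by
    intro i
    calc (∏ j ∈ Finset.univ.erase i, (((j : ℕ) + 1 : ZMod p) - ((i : ℕ) + 1))⁻¹)
        = ∏ j ∈ Finset.univ.erase i,
            ((-1) * (((i : ℕ) + 1 : ZMod p) - ((j : ℕ) + 1))⁻¹) := by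
          refine Finset.prod_congr rfl fun j _ => ?_
          rw [← neg_sub (((i : ℕ) + 1 : ZMod p)) (((j : ℕ) + 1 : ZMod p)), inv_neg]
          ring
      _ = (-1) ^ (n - 1)
            * ∏ j ∈ Finset.univ.erase i, (((i : ℕ) + 1 : ZMod p) - ((j : ℕ) + 1))⁻¹ := by
          rw [Finset.prod_mul_distrib, Finset.prod_const, hcard_erase]
  have hvne : ∀ i : Fin n,
      (∏ j ∈ Finset.univ.erase i, (((j : ℕ) + 1 : ZMod p) - ((i : ℕ) + 1))⁻¹) ≠ 0 := by
    intro i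
    refine Finset.prod_ne_zero_iff.2 fun j hj => ?_
    exact inv_ne_zero (sub_ne_zero.2 (hxinj.ne (Finset.ne_of_mem_erase hj)))
  have hsgn : ((-1 : ZMod p) ^ (n - 1)) ≠ 0 := by
    intro h
    have := pow_eq_zero_iff (n := n - 1) (M₀ := ZMod p) (by omega) |>.1 h
    exact (neg_ne_zero.2 one_ne_zero) this
  constructor
  · -- hard direction
    intro horth
    set r : Polynomial (ZMod p) :=
      Lagrange.interpolate Finset.univ (fun i : Fin n => ((i : ℕ) + 1 : ZMod p))
        (fun i => y i *
          (∏ j ∈ Finset.univ.erase i, (((j : ℕ) + 1 : ZMod p) - ((i : ℕ) + 1))⁻¹)⁻¹)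
      with hrdef
    have hrdeg : r.degree < n := by
      have := Lagrange.degree_interpolate_lt (s := Finset.univ)
        (fun i : Fin n => y i *
          (∏ j ∈ Finset.univ.erase i, (((j : ℕ) + 1 : ZMod p) - ((i : ℕ) + 1))⁻¹)⁻¹)
        hxinj.injOn
      simpa only [Finset.card_univ, Fintype.card_fin] using this
    have hy : ∀ i : Fin n, y i =
        (∏ j ∈ Finset.univ.erase i, (((j : ℕ) + 1 : ZMod p) - ((i : ℕ) + 1))⁻¹)
          * r.eval ((i : ℕ) + 1 : ZMod p) := by
      intro i
      have he := Lagrange.eval_interpolate_at_node (s := Finset.univ)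
        (fun i : Fin n => y i *
          (∏ j ∈ Finset.univ.erase i, (((j : ℕ) + 1 : ZMod p) - ((i : ℕ) + 1))⁻¹)⁻¹)
        hxinj.injOn (Finset.mem_univ i)
      simp only [← hrdef] at he
      rw [he, mul_comm (y i) _, ← mul_assoc, mul_inv_cancel₀ (hvne i), one_mul]
    have hnat : r.natDegree ≤ n - 1 := by
      by_cases hr0 : r = 0
      · simp [hr0]
      · have := (Polynomial.natDegree_lt_iff_degree_lt hr0).2 hrdeg
        omega
    have step : ∀ k, k ≤ t → r.natDegree ≤ n - 1 - k → r.natDegree ≤ n - 2 - k := by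
      intro k hk hle
      have hXk : ((X : Polynomial (ZMod p)) ^ k * r).natDegree ≤ n - 1 := by
        calc ((X : Polynomial (ZMod p)) ^ k * r).natDegree
            ≤ (X ^ k : Polynomial (ZMod p)).natDegree + r.natDegree :=
              Polynomial.natDegree_mul_le
          _ ≤ k + (n - 1 - k) := by rw [natDegree_X_pow]; omega
          _ ≤ n - 1 := by omega
      have hdlt : ((X : Polynomial (ZMod p)) ^ k * r).degree < n := by
        refine lt_of_le_of_lt Polynomial.degree_le_natDegree ?_
        exact_mod_cast (show ((X : Polynomial (ZMod p)) ^ k * r).natDegree < n by omega)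
      have hsum := sum_eval_mul _ hxinj ((X : Polynomial (ZMod p)) ^ k * r) hdlt
      have horth' := horth (X ^ k) (by simpa using hk)
      have hz : (-1 : ZMod p) ^ (n - 1) * ((X : Polynomial (ZMod p)) ^ k * r).coeff (n - 1)
          = 0 := by
        rw [← hsum, Finset.mul_sum, ← horth']
        refine Finset.sum_congr rfl fun i _ => ?_
        rw [hy i, hvw i, Polynomial.eval_mul]
        ring
      have hc0 : ((X : Polynomial (ZMod p)) ^ k * r).coeff (n - 1) = 0 := by
        rcases mul_eq_zero.1 hz with h | h
        · exact absurd h hsgn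
        · exact h
      have hek : n - 1 = (n - 1 - k) + k := by omega
      rw [hek, Polynomial.coeff_X_pow_mul] at hc0
      rw [Polynomial.natDegree_le_iff_coeff_eq_zero]
      intro m hm
      rcases eq_or_lt_of_le (show n - 1 - k ≤ m by omega) with hme | hml
      · rw [← hme]; exact hc0
      · exact Polynomial.coeff_eq_zero_of_natDegree_lt (lt_of_le_of_lt hle hml)
    have key : r.natDegree ≤ n - 2 - t := by
      have H : ∀ k, k ≤ t → r.natDegree ≤ n - 2 - k := by
        intro k
        induction k with
        | zero => intro _; exact step 0 (Nat.zero_le _) (by omega)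
        | succ k ih =>
          intro hk
          have h1 := ih (by omega)
          exact step (k + 1) hk (by omega)
      exact H t le_rfl
    exact ⟨r, by omega, hy⟩
  · rintro ⟨r, hr, hy⟩ q hq
    have hmul : (q * r).natDegree ≤ t + (n - t - 2) :=
      le_trans Polynomial.natDegree_mul_le (add_le_add hq hr)
    have hqr : (q * r).degree < n := by
      refine lt_of_le_of_lt Polynomial.degree_le_natDegree ?_
      exact_mod_cast (show (q * r).natDegree < n by omega)
    have hsum := sum_eval_mul _ hxinj (q * r) hqr
    have hc : (q * r).coeff (n - 1) = 0 :=
      Polynomial.coeff_eq_zero_of_natDegree_lt (by omega)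
    calc ∑ i : Fin n, q.eval ((i : ℕ) + 1 : ZMod p) * y i
        = (-1 : ZMod p) ^ (n - 1) * ∑ i : Fin n, (q * r).eval ((i : ℕ) + 1 : ZMod p)
            * ∏ j ∈ Finset.univ.erase i, (((i : ℕ) + 1 : ZMod p) - ((j : ℕ) + 1))⁻¹ := by
          rw [Finset.mul_sum]
          refine Finset.sum_congr rfl fun i _ => ?_
          rw [hy i, hvw i, Polynomial.eval_mul]
          ring
      _ = 0 := by rw [hsum, hc, mul_zero]
end

section
/- Correctness of the ACPS-style decryption: let p be prime, q = p², A in (Z_q)^{v×u}, b^T = s^T·A + e^T mod q, and a ciphertext c1 = A·r mod q, c2 = b·r + e' + p·m mod q with m in Z_p. Let f = e^T·r + e' (computed over the integers). If |f| < p/2, then decryption succeeds: computing d = c2 - s^T·c1 mod q, then f' = d mod p cast to the integer interval [-(p-1)/2, (p-1)/2], and m' = (d - f')/p mod p, yields m' = m and f' = f. -/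
lemma bmod_eq_self_of_abs (f : ℤ) (p : ℕ) (h : 2 * |f| < (p : ℤ)) :
    Int.bmod f p = f := by
  have h1 : -(p:ℤ) < 2 * f := by
    have := neg_abs_le f; linarith
  have h2 : 2 * f < (p:ℤ) := by
    have := le_abs_self f; linarith
  have hp0 : (0:ℤ) < p := by omega
  have e1 : f % (p:ℤ) = if 0 ≤ f then f else f + p := by
    split
    · exact Int.emod_eq_of_lt (by assumption) (by omega)
    · calc f % (p:ℤ) = (f + (p:ℤ) * 1) % p := (Int.add_mul_emod_self_left ..).symm
        _ = f + p := by rw [mul_one]; exact Int.emod_eq_of_lt (by omega) (by omega)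
  rw [Int.bmod_def, e1]
  split <;> split <;> omega

/-- Correctness of ACPS-style decryption with modulus `q = p²`: if `b = sᵀA + eᵀ`,
`c₁ = A·r`, `c₂ = b·r + e' + p·m` with `m ∈ Z_p`, and the integer noise
`f = eᵀ·r + e'` satisfies `|f| < p/2`, then computing `d = c₂ - sᵀ·c₁`,
`f' = ` the representative of `d mod p` in `[-(p-1)/2, (p-1)/2]`, and
`m' = (d - f')/p mod p` recovers `m' = m` and `f' = f`. -/
theorem acps_decryption_correct (p u v : ℕ) (hp : p.Prime)
    (A : Matrix (Fin v) (Fin u) (ZMod (p ^ 2)))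
    (s : Fin v → ZMod (p ^ 2)) (e r : Fin u → ℤ) (e' m : ℤ)
    (hm0 : 0 ≤ m) (hmp : m < (p : ℤ))
    (b : Fin u → ZMod (p ^ 2))
    (hb : ∀ j, b j = ∑ i, s i * A i j + ((e j : ℤ) : ZMod (p ^ 2)))
    (c1 : Fin v → ZMod (p ^ 2))
    (hc1 : ∀ i, c1 i = ∑ j, A i j * ((r j : ℤ) : ZMod (p ^ 2)))
    (c2 : ZMod (p ^ 2))
    (hc2 : c2 = ∑ j, b j * ((r j : ℤ) : ZMod (p ^ 2)) + ((e' : ℤ) : ZMod (p ^ 2))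
      + (p : ZMod (p ^ 2)) * ((m : ℤ) : ZMod (p ^ 2)))
    (f : ℤ) (hf : f = ∑ j, e j * r j + e')
    (hfbound : 2 * |f| < (p : ℤ))
    (d : ZMod (p ^ 2)) (hd : d = c2 - ∑ i, s i * c1 i)
    (f' : ℤ) (hf' : f' = Int.bmod (d.val : ℤ) p)
    (m' : ZMod p) (hm' : m' = ((((d.val : ℤ) - f') / (p : ℤ) : ℤ) : ZMod p)) :
    f' = f ∧ m' = ((m : ℤ) : ZMod p) := by
  have hppos : 0 < p := hp.pos
  haveI : NeZero (p ^ 2) := ⟨by positivity⟩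
  -- Step 1: d = cast of p*m + f
  have hdval : d = (((p : ℤ) * m + f : ℤ) : ZMod (p ^ 2)) := by
    subst hd hc2 hf
    simp only [hb, hc1]
    push_cast
    simp only [add_mul, Finset.sum_mul, Finset.mul_sum, Finset.sum_add_distrib, mul_assoc]
    rw [Finset.sum_comm]
    ring
  -- Step 2: integer congruence
  have hcong : ((p : ℤ) ^ 2) ∣ ((d.val : ℤ) - ((p : ℤ) * m + f)) := by
    have : (((d.val : ℤ)) : ZMod (p ^ 2)) = (((p : ℤ) * m + f : ℤ) : ZMod (p ^ 2)) := by
      rw [Int.cast_natCast, ZMod.natCast_val, ZMod.cast_id, hdval]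
    have h3 := (ZMod.intCast_eq_intCast_iff' _ _ _).mp this
    push_cast at h3
    exact dvd_sub_comm.mp (Int.ModEq.dvd h3)
  obtain ⟨k, hk⟩ := hcong
  have hdv : (d.val : ℤ) = (p : ℤ) * m + f + (p : ℤ) ^ 2 * k := by linarith
  -- f' = f
  have hf'f : f' = f := by
    rw [hf', hdv]
    have : (p:ℤ) * m + f + (p:ℤ)^2 * k = f + (p:ℤ) * (m + p * k) := by ring
    rw [this, Int.add_mul_bmod_self_left]
    exact bmod_eq_self_of_abs f p hfbound
  refine ⟨hf'f, ?_⟩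
  rw [hm', hf'f]
  have : ((d.val : ℤ) - f) / (p : ℤ) = m + (p : ℤ) * k := by
    rw [hdv]
    have : (p:ℤ) * m + f + (p:ℤ)^2 * k - f = (p:ℤ) * (m + (p:ℤ) * k) := by ring
    rw [this, Int.mul_ediv_cancel_left _ (by exact_mod_cast hppos.ne')]
  rw [this]
  push_cast
  simp
end

section
/- Special soundness of the key-generation Σ-protocol: let A in (Z_q)^{v×u}, b in (Z_q)^u, d in (Z_q)^u, and suppose there exist two accepting transcripts with the same first message d and distinct challenges c = 0 and c = 1: vectors (z_0, t_0) and (z_1, t_1) with z_c^T·A + t_c^T = d + c·b mod q and ||(z_c || t_c)|| ≤ B for c in {0,1}. Then b = (z_1 - z_0)^T·A + (t_1 - t_0)^T mod q with ||z_1 - z_0|| ≤ 2B and ||t_1 - t_0|| ≤ 2B; i.e., (A,b) admits an LWE witness with norms at most 2B. -/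
lemma sqrt_sub_le {n : ℕ} (f g : Fin n → ℝ) :
    Real.sqrt (∑ i, (f i - g i) ^ 2) ≤
      Real.sqrt (∑ i, (f i) ^ 2) + Real.sqrt (∑ i, (g i) ^ 2) := by
  have key : ∀ x : EuclideanSpace ℝ (Fin n), ‖x‖ = Real.sqrt (∑ i, (x i) ^ 2) := by
    intro x
    rw [EuclideanSpace.norm_eq]
    congr 1
    exact Finset.sum_congr rfl fun i _ => by rw [Real.norm_eq_abs, sq_abs]
  have := norm_sub_le (WithLp.toLp 2 f : EuclideanSpace ℝ (Fin n)) (WithLp.toLp 2 g)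
  simpa [key, Pi.sub_apply] using this

/-- Special soundness of the key-generation Σ-protocol: two accepting transcripts
with the same first message `d` and challenges `0` and `1` yield an LWE witness
`(z₁ - z₀, t₁ - t₀)` for `b` with Euclidean norms at most `2B`. -/
theorem keygen_special_soundness (q u v : ℕ)
    (A : Matrix (Fin v) (Fin u) (ZMod q)) (b d : Fin u → ZMod q) (B : ℝ)
    (z : Fin 2 → Fin v → ℤ) (t : Fin 2 → Fin u → ℤ)
    (hver : ∀ c : Fin 2, ∀ j, ∑ i, ((z c i : ℤ) : ZMod q) * A i j + ((t c j : ℤ) : ZMod q)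
        = d j + (((c : ℕ) : ℕ) : ZMod q) * b j)
    (hnorm : ∀ c : Fin 2,
      Real.sqrt ((∑ i, ((z c i : ℝ)) ^ 2) + ∑ j, ((t c j : ℝ)) ^ 2) ≤ B) :
    (∀ j, b j = ∑ i, ((z 1 i - z 0 i : ℤ) : ZMod q) * A i j
        + ((t 1 j - t 0 j : ℤ) : ZMod q)) ∧
      Real.sqrt (∑ i, ((z 1 i - z 0 i : ℝ)) ^ 2) ≤ 2 * B ∧
      Real.sqrt (∑ j, ((t 1 j - t 0 j : ℝ)) ^ 2) ≤ 2 * B := by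
  have hz : ∀ c : Fin 2, Real.sqrt (∑ i, ((z c i : ℝ)) ^ 2) ≤ B := by
    intro c
    refine le_trans (Real.sqrt_le_sqrt ?_) (hnorm c)
    have : (0:ℝ) ≤ ∑ j, ((t c j : ℝ)) ^ 2 :=
      Finset.sum_nonneg fun j _ => sq_nonneg _
    linarith
  have ht : ∀ c : Fin 2, Real.sqrt (∑ j, ((t c j : ℝ)) ^ 2) ≤ B := by
    intro c
    refine le_trans (Real.sqrt_le_sqrt ?_) (hnorm c)
    have : (0:ℝ) ≤ ∑ i, ((z c i : ℝ)) ^ 2 :=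
      Finset.sum_nonneg fun i _ => sq_nonneg _
    linarith
  refine ⟨?_, ?_, ?_⟩
  · intro j
    have h0 := hver 0 j
    have h1 := hver 1 j
    simp only [Fin.val_zero, Fin.val_one, Nat.cast_zero, Nat.cast_one, zero_mul,
      one_mul, add_zero] at h0 h1
    have := congrArg₂ (· - ·) h1 h0
    clear this
    have hb : b j = (∑ i, ((z 1 i : ℤ) : ZMod q) * A i j + ((t 1 j : ℤ) : ZMod q))
        - (∑ i, ((z 0 i : ℤ) : ZMod q) * A i j + ((t 0 j : ℤ) : ZMod q)) := by
      rw [h0, h1]; ring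
    rw [hb]
    push_cast
    simp only [sub_mul, Finset.sum_sub_distrib]
    ring
  · have := sqrt_sub_le (fun i => (z 1 i : ℝ)) (fun i => (z 0 i : ℝ))
    have h2 : Real.sqrt (∑ i, ((z 1 i : ℝ) - (z 0 i : ℝ)) ^ 2) ≤ 2 * B := by
      calc Real.sqrt (∑ i, ((z 1 i : ℝ) - (z 0 i : ℝ)) ^ 2)
          ≤ Real.sqrt (∑ i, ((z 1 i : ℝ)) ^ 2) + Real.sqrt (∑ i, ((z 0 i : ℝ)) ^ 2) := this
        _ ≤ B + B := add_le_add (hz 1) (hz 0)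
        _ = 2 * B := by ring
    convert h2 using 3
  · have := sqrt_sub_le (fun j => (t 1 j : ℝ)) (fun j => (t 0 j : ℝ))
    have h2 : Real.sqrt (∑ j, ((t 1 j : ℝ) - (t 0 j : ℝ)) ^ 2) ≤ 2 * B := by
      calc Real.sqrt (∑ j, ((t 1 j : ℝ) - (t 0 j : ℝ)) ^ 2)
          ≤ Real.sqrt (∑ j, ((t 1 j : ℝ)) ^ 2) + Real.sqrt (∑ j, ((t 0 j : ℝ)) ^ 2) := this
        _ ≤ B + B := add_le_add (ht 1) (ht 0)
        _ = 2 * B := by ring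
    convert h2 using 3
end

section
/- Special soundness extraction for the decryption Σ-protocol: suppose for a statement (A, b, c1, c2, m) there exist two accepting transcripts with the same first messages (d, h) and challenges 0 and 1, i.e., vectors (z_c, t_c, t'_c) for c in {0,1} satisfying z_c^T·A + t_c^T = d + c·b mod q, z_c^T·c1 + t'_c = h + c·(c2 - p·m) mod q, and ||(z_c || t_c || t'_c)|| ≤ B. Then setting s = z_1 - z_0, e = t_1 - t_0, f = t'_1 - t'_0 gives b = s^T·A + e^T mod q and c2 - p·m = s^T·c1 + f mod q with ||s|| ≤ 2B, ||e|| ≤ 2B, |f| ≤ 2B. -/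
lemma sqrt_sub_le_s9 {n : ℕ} (x y : Fin n → ℝ) (B : ℝ)
    (hx : Real.sqrt (∑ i, (x i) ^ 2) ≤ B) (hy : Real.sqrt (∑ i, (y i) ^ 2) ≤ B) :
    Real.sqrt (∑ i, (x i - y i) ^ 2) ≤ 2 * B := by
  have hX : Real.sqrt (∑ i, (x i) ^ 2) = ‖(EuclideanSpace.equiv (Fin n) ℝ).symm x‖ := by
    rw [EuclideanSpace.norm_eq]; simp [sq_abs]
  have hY : Real.sqrt (∑ i, (y i) ^ 2) = ‖(EuclideanSpace.equiv (Fin n) ℝ).symm y‖ := by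
    rw [EuclideanSpace.norm_eq]; simp [sq_abs]
  have hXY : Real.sqrt (∑ i, (x i - y i) ^ 2)
      = ‖(EuclideanSpace.equiv (Fin n) ℝ).symm x - (EuclideanSpace.equiv (Fin n) ℝ).symm y‖ := by
    rw [EuclideanSpace.norm_eq]; simp [sq_abs]
  rw [hXY]
  calc _ ≤ ‖(EuclideanSpace.equiv (Fin n) ℝ).symm x‖ + ‖(EuclideanSpace.equiv (Fin n) ℝ).symm y‖ :=
        norm_sub_le _ _
    _ ≤ B + B := add_le_add (hX ▸ hx) (hY ▸ hy)
    _ = 2 * B := by ring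

/-- Special soundness extraction for the decryption Σ-protocol: two accepting transcripts
with the same first messages `(d, h)` and challenges `0`, `1` yield a witness
`s = z₁ - z₀`, `e = t₁ - t₀`, `f = t'₁ - t'₀` with `b = sᵀA + eᵀ`,
`c₂ - p·m = sᵀc₁ + f` (mod q) and norms at most `2B`. -/
theorem dec_special_soundness (q p u v : ℕ)
    (A : Matrix (Fin v) (Fin u) (ZMod q))
    (b : Fin u → ZMod q) (c1 : Fin v → ZMod q) (c2 : ZMod q) (m : ℤ)
    (d : Fin u → ZMod q) (h : ZMod q) (B : ℝ)
    (z : Fin 2 → Fin v → ℤ) (t : Fin 2 → Fin u → ℤ) (t' : Fin 2 → ℤ)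
    (hver1 : ∀ c : Fin 2, ∀ j, ∑ i, ((z c i : ℤ) : ZMod q) * A i j + ((t c j : ℤ) : ZMod q)
        = d j + (((c : ℕ) : ℕ) : ZMod q) * b j)
    (hver2 : ∀ c : Fin 2, ∑ i, ((z c i : ℤ) : ZMod q) * c1 i + ((t' c : ℤ) : ZMod q)
        = h + (((c : ℕ) : ℕ) : ZMod q) * (c2 - (p : ZMod q) * ((m : ℤ) : ZMod q)))
    (hnorm : ∀ c : Fin 2,
      Real.sqrt ((∑ i, ((z c i : ℝ)) ^ 2) + (∑ j, ((t c j : ℝ)) ^ 2) + ((t' c : ℝ)) ^ 2) ≤ B) :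
    (∀ j, b j = ∑ i, ((z 1 i - z 0 i : ℤ) : ZMod q) * A i j
        + ((t 1 j - t 0 j : ℤ) : ZMod q)) ∧
      (c2 - (p : ZMod q) * ((m : ℤ) : ZMod q)
        = ∑ i, ((z 1 i - z 0 i : ℤ) : ZMod q) * c1 i + ((t' 1 - t' 0 : ℤ) : ZMod q)) ∧
      Real.sqrt (∑ i, ((z 1 i - z 0 i : ℝ)) ^ 2) ≤ 2 * B ∧
      Real.sqrt (∑ j, ((t 1 j - t 0 j : ℝ)) ^ 2) ≤ 2 * B ∧
      ((|t' 1 - t' 0| : ℤ) : ℝ) ≤ 2 * B := by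
  -- norm bounds on pieces
  have hz : ∀ c : Fin 2, Real.sqrt (∑ i, ((z c i : ℝ)) ^ 2) ≤ B := by
    intro c
    refine le_trans (Real.sqrt_le_sqrt ?_) (hnorm c)
    nlinarith [Finset.sum_nonneg (s := (Finset.univ : Finset (Fin u))) (fun j _ => sq_nonneg ((t c j : ℝ))), sq_nonneg ((t' c : ℝ))]
  have ht : ∀ c : Fin 2, Real.sqrt (∑ j, ((t c j : ℝ)) ^ 2) ≤ B := by
    intro c
    refine le_trans (Real.sqrt_le_sqrt ?_) (hnorm c)
    nlinarith [Finset.sum_nonneg (s := (Finset.univ : Finset (Fin v))) (fun i _ => sq_nonneg ((z c i : ℝ))), sq_nonneg ((t' c : ℝ))]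
  have ht' : ∀ c : Fin 2, |(t' c : ℝ)| ≤ B := by
    intro c
    have : Real.sqrt (((t' c : ℝ)) ^ 2) ≤ B := by
      refine le_trans (Real.sqrt_le_sqrt ?_) (hnorm c)
      nlinarith [Finset.sum_nonneg (s := (Finset.univ : Finset (Fin v))) (fun i _ => sq_nonneg ((z c i : ℝ))),
        Finset.sum_nonneg (s := (Finset.univ : Finset (Fin u))) (fun j _ => sq_nonneg ((t c j : ℝ)))]
    rwa [Real.sqrt_sq_eq_abs] at this
  refine ⟨?_, ?_, ?_, ?_, ?_⟩
  · intro j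
    have h1 := hver1 1 j
    have h0 := hver1 0 j
    simp only [Fin.val_one, Fin.val_zero, Nat.cast_one, Nat.cast_zero, one_mul, zero_mul,
      add_zero] at h1 h0
    simp only [Int.cast_sub, sub_mul, Finset.sum_sub_distrib]
    linear_combination h0 - h1
  · have h1 := hver2 1
    have h0 := hver2 0
    simp only [Fin.val_one, Fin.val_zero, Nat.cast_one, Nat.cast_zero, one_mul, zero_mul,
      add_zero] at h1 h0
    simp only [Int.cast_sub, sub_mul, Finset.sum_sub_distrib]
    linear_combination h0 - h1
  · have := sqrt_sub_le_s9 (fun i => (z 1 i : ℝ)) (fun i => (z 0 i : ℝ)) B (hz 1) (hz 0)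
    simpa using this
  · have := sqrt_sub_le_s9 (fun j => (t 1 j : ℝ)) (fun j => (t 0 j : ℝ)) B (ht 1) (ht 0)
    simpa using this
  · push_cast
    calc |(t' 1 : ℝ) - (t' 0 : ℝ)| ≤ |(t' 1 : ℝ)| + |(t' 0 : ℝ)| := abs_sub _ _
      _ ≤ B + B := add_le_add (ht' 1) (ht' 0)
      _ = 2 * B := by ring
end

section
/- Special soundness of the sharing Σ-protocol implies share validity: let H be the parity-check matrix of the Shamir code in (Z_p)^{n×(n-t-1)}. Suppose for each i, b_i = s_i^T·A + e_i^T mod q with ||e_i|| ≤ B_e, and suppose there exist two accepting transcripts with the same first messages (a_{1i}, a_{2i}) and challenges 0, 1: vectors (z_{ci}, h_{ci}, t_{ci}) with A·z_{ci} = a_{1i} + c·c_{1i} mod q, b_i·z_{ci} + h_{ci} + p·t_{ci} = a_{2i} + c·c_{2i} mod q, ||(z_{ci}||h_{ci})|| ≤ B, and t_c^T·H = 0 mod p for c in {0,1}. Then for each i, c_{2i} - s_i^T·c_{1i} = p·(t_{1i} - t_{0i}) + f_i mod q where f_i = h_{1i} - h_{0i} + e_i^T·(z_{1i} - z_{0i})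 satisfies |f_i| ≤ 2B·(B_e + 1), and the vector (t_{1i} - t_{0i})_i satisfies (t_1 - t_0)^T·H = 0 mod p. -/
lemma pmul_sub (p : ℕ) [NeZero p] (a b : ZMod p) :
    ((p * (a - b).val : ℕ) : ZMod (p ^ 2))
      = ((p * a.val : ℕ) : ZMod (p ^ 2)) - ((p * b.val : ℕ) : ZMod (p ^ 2)) := by
  have hd : (p : ℤ) ∣ (((a - b).val : ℤ) - (a.val : ℤ) + (b.val : ℤ)) := by
    have h0 : (((a-b).val : ZMod p) - (a.val : ZMod p) + (b.val : ZMod p)) = 0 := by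
      simp [ZMod.natCast_val, ZMod.cast_id]
    exact (ZMod.intCast_zmod_eq_zero_iff_dvd _ p).mp (by push_cast; exact_mod_cast h0)
  obtain ⟨k, hk⟩ := hd
  have hp2 : ((p : ZMod (p^2)))^2 = 0 := by
    rw [← Nat.cast_pow]; exact ZMod.natCast_self _
  have hkc : (((a - b).val : ZMod (p^2)) - ((a.val : ℕ) : ZMod (p^2)) + ((b.val : ℕ) : ZMod (p^2))) = (p : ZMod (p^2)) * (k : ZMod (p^2)) := by
    have := congrArg (fun x : ℤ => (x : ZMod (p^2))) hk
    push_cast at this; exact this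
  push_cast
  linear_combination (p : ZMod (p^2)) * hkc + (k : ZMod (p^2)) * hp2



/-- Special soundness of the sharing Σ-protocol implies share validity.
`H` is the parity-check matrix of the Shamir code with threshold `th`
(entries `vᵢ·iᵏ`), keys satisfy `bᵢ = sᵢᵀA + eᵢᵀ` with `‖eᵢ‖ ≤ B_e`, and two accepting
transcripts with the same first messages and challenges `0`, `1` are given.
Then each ciphertext decrypts under `sᵢ` to the extracted message `t₁ᵢ - t₀ᵢ` with
noise `fᵢ = (h₁ᵢ - h₀ᵢ) + eᵢᵀ(z₁ᵢ - z₀ᵢ)` of absolute value at most `2B(B_e + 1)`,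
and the extracted message vector lies in the kernel of `Hᵀ` mod `p`. -/
theorem sharing_special_soundness (p u v n th : ℕ) (hp : p.Prime)
    (hn : 2 ≤ n) (hth : th ≤ n - 2) (hnp : n < p)
    (A : Matrix (Fin v) (Fin u) (ZMod (p ^ 2)))
    (H : Fin n → Fin (n - th - 1) → ZMod p)
    (hH : ∀ i k, H i k =
      (∏ j ∈ Finset.univ.erase i,
          (((j : ℕ) + 1 : ZMod p) - ((i : ℕ) + 1 : ZMod p))⁻¹)
        * ((i : ℕ) + 1 : ZMod p) ^ (k : ℕ))
    (s : Fin n → Fin v → ZMod (p ^ 2)) (e : Fin n → Fin u → ℤ)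
    (b : Fin n → Fin u → ZMod (p ^ 2)) (Be B : ℝ)
    (hb : ∀ i j, b i j = ∑ iv, s i iv * A iv j + ((e i j : ℤ) : ZMod (p ^ 2)))
    (he : ∀ i, Real.sqrt (∑ j, ((e i j : ℝ)) ^ 2) ≤ Be)
    (c1 : Fin n → Fin v → ZMod (p ^ 2)) (c2 : Fin n → ZMod (p ^ 2))
    (a1 : Fin n → Fin v → ZMod (p ^ 2)) (a2 : Fin n → ZMod (p ^ 2))
    (z : Fin 2 → Fin n → Fin u → ℤ) (h : Fin 2 → Fin n → ℤ)
    (tt : Fin 2 → Fin n → ZMod p)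
    (hver1 : ∀ c : Fin 2, ∀ i, ∀ iv : Fin v,
      ∑ j, A iv j * ((z c i j : ℤ) : ZMod (p ^ 2))
        = a1 i iv + (((c : ℕ) : ℕ) : ZMod (p ^ 2)) * c1 i iv)
    (hver2 : ∀ c : Fin 2, ∀ i,
      (∑ j, b i j * ((z c i j : ℤ) : ZMod (p ^ 2))) + ((h c i : ℤ) : ZMod (p ^ 2))
          + ((p * (tt c i).val : ℕ) : ZMod (p ^ 2))
        = a2 i + (((c : ℕ) : ℕ) : ZMod (p ^ 2)) * c2 i)
    (hnorm : ∀ c : Fin 2, ∀ i,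
      Real.sqrt ((∑ j, ((z c i j : ℝ)) ^ 2) + ((h c i : ℝ)) ^ 2) ≤ B)
    (hker : ∀ c : Fin 2, ∀ k, ∑ i, tt c i * H i k = 0) :
    (∀ i, c2 i - ∑ iv, s i iv * c1 i iv
        = ((p * (tt 1 i - tt 0 i).val : ℕ) : ZMod (p ^ 2))
          + (((h 1 i - h 0 i + ∑ j, e i j * (z 1 i j - z 0 i j) : ℤ)) : ZMod (p ^ 2))) ∧
      (∀ i, ((|h 1 i - h 0 i + ∑ j, e i j * (z 1 i j - z 0 i j)| : ℤ) : ℝ)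
        ≤ 2 * B * (Be + 1)) ∧
      (∀ k, ∑ i, (tt 1 i - tt 0 i) * H i k = 0) := by
  haveI : NeZero p := ⟨hp.ne_zero⟩
  refine ⟨?_, ?_, ?_⟩
  · intro i
    have e1 := hver2 1 i
    have e0 := hver2 0 i
    simp only [Fin.isValue, Fin.val_one, Fin.val_zero, Nat.cast_one, Nat.cast_zero, one_mul,
      zero_mul, add_zero] at e1 e0
    have hbz : ∀ c : Fin 2, ∑ j, b i j * ((z c i j : ℤ) : ZMod (p ^ 2))
        = ∑ iv, s i iv * (∑ j, A iv j * ((z c i j : ℤ) : ZMod (p ^ 2)))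
          + ∑ j, ((e i j : ℤ) : ZMod (p ^ 2)) * ((z c i j : ℤ) : ZMod (p ^ 2)) := by
      intro c
      simp_rw [hb, add_mul, Finset.sum_add_distrib, Finset.sum_mul, Finset.mul_sum]
      rw [Finset.sum_comm]
      simp_rw [mul_assoc]
    have hAz : ∀ iv, (∑ j, A iv j * ((z 1 i j : ℤ) : ZMod (p ^ 2)))
        - (∑ j, A iv j * ((z 0 i j : ℤ) : ZMod (p ^ 2))) = c1 i iv := by
      intro iv
      rw [hver1 1 i iv, hver1 0 i iv]
      simp
    have hS : ∑ iv, s i iv * ((∑ j, A iv j * ((z 1 i j : ℤ) : ZMod (p ^ 2)))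
          - (∑ j, A iv j * ((z 0 i j : ℤ) : ZMod (p ^ 2))))
        = ∑ iv, s i iv * c1 i iv :=
      Finset.sum_congr rfl fun iv _ => by rw [hAz iv]
    have hE : (∑ j, ((e i j : ℤ) : ZMod (p ^ 2)) * (((z 1 i j : ℤ) : ZMod (p ^ 2)) - ((z 0 i j : ℤ) : ZMod (p ^ 2))))
        = ∑ j, ((e i j : ℤ) : ZMod (p ^ 2)) * ((z 1 i j : ℤ) : ZMod (p ^ 2))
          - ∑ j, ((e i j : ℤ) : ZMod (p ^ 2)) * ((z 0 i j : ℤ) : ZMod (p ^ 2)) := by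
      rw [← Finset.sum_sub_distrib]
      exact Finset.sum_congr rfl fun j _ => by ring
    have hS2 : ∑ iv, s i iv * ((∑ j, A iv j * ((z 1 i j : ℤ) : ZMod (p ^ 2)))
          - (∑ j, A iv j * ((z 0 i j : ℤ) : ZMod (p ^ 2))))
        = ∑ iv, s i iv * (∑ j, A iv j * ((z 1 i j : ℤ) : ZMod (p ^ 2)))
          - ∑ iv, s i iv * (∑ j, A iv j * ((z 0 i j : ℤ) : ZMod (p ^ 2))) := by
      rw [← Finset.sum_sub_distrib]
      exact Finset.sum_congr rfl fun iv _ => by ring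
    rw [pmul_sub p (tt 1 i) (tt 0 i)]
    push_cast at e1 e0
    push_cast
    linear_combination -e1 + e0 + hbz 1 - hbz 0 + hS - hS2 - hE
  · intro i
    have hB : 0 ≤ B := le_trans (Real.sqrt_nonneg _) (hnorm 0 i)
    have hBe : 0 ≤ Be := le_trans (Real.sqrt_nonneg _) (he i)
    set E : EuclideanSpace ℝ (Fin u) := WithLp.toLp 2 (fun j => (e i j : ℝ)) with hEdef
    set Z : Fin 2 → EuclideanSpace ℝ (Fin u) := fun c => WithLp.toLp 2 (fun j => (z c i j : ℝ)) with hZdef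
    have hnE : ‖E‖ ≤ Be := by
      rw [EuclideanSpace.norm_eq]
      simpa [sq_abs] using he i
    have hnZ : ∀ c, ‖Z c‖ ≤ B := by
      intro c
      rw [EuclideanSpace.norm_eq]
      refine le_trans (Real.sqrt_le_sqrt ?_) (hnorm c i)
      simp only [Real.norm_eq_abs, sq_abs, hZdef, PiLp.toLp_apply]
      exact le_add_of_nonneg_right (sq_nonneg _)
    have hh : ∀ c, |(h c i : ℝ)| ≤ B := by
      intro c
      rw [← Real.sqrt_sq_eq_abs]
      refine le_trans (Real.sqrt_le_sqrt ?_) (hnorm c i)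
      exact le_add_of_nonneg_left (Finset.sum_nonneg fun j _ => sq_nonneg _)
    have hCS : |∑ j, (e i j : ℝ) * ((z 1 i j : ℝ) - (z 0 i j : ℝ))| ≤ Be * (2 * B) := by
      have h1 : (inner ℝ E (Z 1 - Z 0) : ℝ) = ∑ j, (e i j : ℝ) * ((z 1 i j : ℝ) - (z 0 i j : ℝ)) := by
        rw [PiLp.inner_apply]
        simp [hEdef, hZdef, mul_comm]
      calc |∑ j, (e i j : ℝ) * ((z 1 i j : ℝ) - (z 0 i j : ℝ))|
          = |(inner ℝ E (Z 1 - Z 0) : ℝ)| := by rw [h1]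
        _ ≤ ‖E‖ * ‖Z 1 - Z 0‖ := abs_real_inner_le_norm _ _
        _ ≤ Be * (2 * B) := by
            refine mul_le_mul hnE (le_trans (norm_sub_le _ _) ?_) (norm_nonneg _) hBe
            linarith [hnZ 1, hnZ 0]
    rw [Int.cast_abs]
    push_cast
    calc |(h 1 i : ℝ) - (h 0 i : ℝ) + ∑ j, (e i j : ℝ) * ((z 1 i j : ℝ) - (z 0 i j : ℝ))|
        ≤ |(h 1 i : ℝ) - (h 0 i : ℝ)| + |∑ j, (e i j : ℝ) * ((z 1 i j : ℝ) - (z 0 i j : ℝ))| :=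
          abs_add_le _ _
      _ ≤ (|(h 1 i : ℝ)| + |(h 0 i : ℝ)|) + Be * (2 * B) := add_le_add (abs_sub _ _) hCS
      _ ≤ 2 * B * (Be + 1) := by nlinarith [hh 1, hh 0]
  · intro k
    simp_rw [sub_mul]
    rw [Finset.sum_sub_distrib, hker 1 k, hker 0 k, sub_zero]
end
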